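/- arXiv:2010.11402 — 3 statements merged into one kernel-verified Lean document; each statement's English description precedes it below -/
import Mathlib

section
/- Let d ≥ 1, 0 < γ₀ < 1, τ₀ > d − 1, and let ω₀ ∈ ℝ^d satisfy |⟨k,ω₀⟩| ≥ γ₀/|k|₁^{τ₀} for every nonzero k ∈ ℤ^d. Let s > 0, M > 0, and let (a_k)_{k ∈ ℤ^d∖{0}} be complex numbers with |a_k| ≤ M e^{−s|k|₁} for all k ≠ 0. Then there is a constant C > 0 depending only on d and τ₀ such that for every 0 < σ < s: (i) the series u(z) = −∑_{k≠0} a_k (i⟨k,ω₀⟩)^{−1} e^{i⟨k,z⟩} converges absolutely and uniformly on the closed strip {z ∈ ℂ^d : |Im z_j| ≤ s − σ for all j}, and |u(z)| ≤ C M γ₀^{−1} σ^{−(τ₀+d)} there; (ii) for every x ∈ ℝ^d one has ∑_{j=1}^d ω₀_j ∂_{x_j} u(x) = −∑_{k≠0} a_k e^{i⟨k,x⟩}, both series converging absolutely. -/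
open scoped BigOperators

/-- The `k`-th term of the series defining the solution `u` of the homological equation
`ω₀ · ∂ₓ u = -(g - ĝ(0))`, where `a k` plays the role of the Fourier coefficient `ĝ(k)`. -/
noncomputable def homTerm (d : ℕ) (ω₀ : Fin d → ℝ) (a : (Fin d → ℤ) → ℂ)
    (k : Fin d → ℤ) (z : Fin d → ℂ) : ℂ :=
  a k / (Complex.I * ∑ i, (k i : ℂ) * (ω₀ i : ℂ)) *
    Complex.exp (Complex.I * ∑ i, (k i : ℂ) * z i)

/-!
Since `ω₀` is Diophantine, the `k`-th term of `u` is bounded on the strip `|Im z| ≤ s - σ` by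
`M γ₀⁻¹ |k|₁^τ₀ e^{-σ|k|₁}`. Splitting `e^{-σ|k|₁}` into three factors, `|k|₁^τ₀ e^{-σ|k|₁/2}`
is at most a multiple of `σ^{-τ₀}`, `e^{-σ|k|₁/4} ≤ e^{-σ/4}` for `k ≠ 0`, and the remaining
factor `∏ᵢ e^{-σ|kᵢ|/4}` sums over `ℤ^d` to at most `(1 + 8/σ)^d`; together with `e^{-σ/4}`
this is `O(σ^{-d})`. The dominating series `∑ ‖a_k‖` allows termwise differentiation along
`x + tω₀`, where each term differentiates to `a_k e^{i⟨k,x⟩}`.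
-/

open Finset Real

lemma rpow_le_mul_exp {p x : ℝ} (hp : 0 ≤ p) (hx : 0 ≤ x) :
    x ^ p ≤ (p / exp 1) ^ p * exp x := by
  rcases hp.eq_or_lt with rfl | hp
  · simpa using one_le_exp hx
  have h : x / p ≤ exp (x / p - 1) := by linarith [add_one_le_exp (x / p - 1)]
  calc x ^ p = p ^ p * (x / p) ^ p := by
        rw [div_rpow hx hp.le, mul_div_cancel₀ _ (rpow_pos_of_pos hp p).ne']
    _ ≤ p ^ p * exp (x / p - 1) ^ p := by gcongr
    _ = (p / exp 1) ^ p * exp x := by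
        rw [← exp_mul, div_rpow hp.le (exp_pos 1).le, ← exp_mul, sub_mul,
          div_mul_cancel₀ _ hp.ne', one_mul, exp_sub]
        ring

lemma rpow_mul_exp_neg_le {p c t : ℝ} (hp : 0 ≤ p) (hc : 0 < c) (ht : 0 ≤ t) :
    t ^ p * exp (-c * t) ≤ (p / exp 1) ^ p * c ^ (-p) := by
  have h := rpow_le_mul_exp hp (mul_nonneg hc.le ht)
  rw [mul_rpow hc.le ht, ← div_le_iff₀ (exp_pos _)] at h
  rw [rpow_neg hc.le, neg_mul, exp_neg]
  calc t ^ p * (exp (c * t))⁻¹ = (c ^ p * t ^ p / exp (c * t)) / c ^ p := by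
        field_simp
    _ ≤ (p / exp 1) ^ p / c ^ p := by gcongr
    _ = _ := div_eq_mul_inv _ _

lemma hasSum_exp_neg_mul_abs {x : ℝ} (hx : 0 < x) :
    HasSum (fun n : ℤ => exp (-x * |(n : ℝ)|)) (1 + 2 / (exp x - 1)) := by
  set r := exp (-x)
  have hr0 : 0 ≤ r := (exp_pos _).le
  have hr1 : r < 1 := exp_lt_one_iff.mpr (by linarith)
  have hpow (n : ℕ) : exp (-x * |(n : ℝ)|) = r ^ n := by
    rw [abs_of_nonneg n.cast_nonneg, ← exp_nat_mul]; ring_nf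
  have hpos : HasSum (fun n : ℕ => exp (-x * |((n : ℤ) : ℝ)|)) (1 - r)⁻¹ := by
    simpa only [Int.cast_natCast, hpow] using hasSum_geometric_of_lt_one hr0 hr1
  have hneg : HasSum (fun n : ℕ => exp (-x * |((-(n + 1) : ℤ) : ℝ)|)) (r * (1 - r)⁻¹) := by
    have hterm : (fun n : ℕ => exp (-x * |((-(n + 1) : ℤ) : ℝ)|)) = fun n => r * r ^ n := by
      funext n
      rw [← pow_succ', ← hpow, Int.cast_neg, abs_neg]
      push_cast
      rfl
    rw [hterm]
    exact (hasSum_geometric_of_lt_one hr0 hr1).mul_left r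
  have hsum : (1 - r)⁻¹ + r * (1 - r)⁻¹ = 1 + 2 / (exp x - 1) := by
    have hx1 : exp x - 1 ≠ 0 := by linarith [add_one_lt_exp hx.ne']
    rw [show r = (exp x)⁻¹ from exp_neg x]
    field_simp
    ring
  exact hsum ▸ HasSum.of_nat_of_neg_add_one (f := fun n : ℤ => exp (-x * |(n : ℝ)|)) hpos hneg

lemma exp_neg_mul_one_add_two_div_pow_le {x : ℝ} (hx : 0 < x) (n : ℕ) :
    exp (-x) * (1 + 2 / x) ^ n ≤ exp 2 * n.factorial * x ^ (-(n : ℝ)) := by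
  have h := pow_div_factorial_le_exp (x := x + 2) (by linarith) n
  rw [div_le_iff₀ (by positivity), exp_add] at h
  rw [rpow_neg hx.le, rpow_natCast, one_add_div hx.ne', div_pow, exp_neg]
  calc (exp x)⁻¹ * ((x + 2) ^ n / x ^ n) ≤ (exp x)⁻¹ * (exp x * exp 2 * n.factorial) / x ^ n := by
        rw [mul_div_assoc]; gcongr
    _ = _ := by field_simp

lemma rpow_mul_exp_neg_le_of_one_le {τ σ w : ℝ} (hτ : 0 ≤ τ) (hσ : 0 < σ) (hw : 1 ≤ w) :
    w ^ τ * exp (-σ * w)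
      ≤ (τ / exp 1) ^ τ * (σ / 2) ^ (-τ) * exp (-(σ / 4)) * exp (-(σ / 4) * w) := by
  have h1 := rpow_mul_exp_neg_le hτ (half_pos hσ) (zero_le_one.trans hw)
  have h2 : exp (-(σ / 4) * w) ≤ exp (-(σ / 4)) := by rw [exp_le_exp]; nlinarith
  calc w ^ τ * exp (-σ * w)
      = w ^ τ * exp (-(σ / 2) * w) * exp (-(σ / 4) * w) * exp (-(σ / 4) * w) := by
        rw [mul_assoc, mul_assoc, ← exp_add, ← exp_add]; ring_nf
    _ ≤ _ := by gcongr

section LatticeSums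

variable {ι : Type*} [Fintype ι]

lemma sum_exp_neg_mul_l1_le {x : ℝ} (hx : 0 < x) (F : Finset (ι → ℤ)) :
    ∑ k ∈ F, exp (-x * ∑ i, |(k i : ℝ)|) ≤ (1 + 2 / x) ^ Fintype.card ι := by
  classical
  let f : ℤ → ℝ := fun n => exp (-x * |(n : ℝ)|)
  have hF : F ⊆ Fintype.piFinset fun i => F.image (· i) := fun k hk =>
    Fintype.mem_piFinset.2 fun i => mem_image_of_mem _ hk
  calc ∑ k ∈ F, exp (-x * ∑ i, |(k i : ℝ)|)
      = ∑ k ∈ F, ∏ i, f (k i) := by simp only [f, mul_sum, exp_sum]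
    _ ≤ ∑ k ∈ Fintype.piFinset fun i => F.image (· i), ∏ i, f (k i) :=
        sum_le_sum_of_subset_of_nonneg hF fun _ _ _ => by positivity
    _ = ∏ i, ∑ n ∈ F.image (· i), f n := (prod_univ_sum _ fun _ => f).symm
    _ ≤ ∏ _i : ι, (1 + 2 / x) := by
        gcongr with i
        refine (sum_le_hasSum _ (fun _ _ => by positivity) (hasSum_exp_neg_mul_abs hx)).trans ?_
        gcongr
        linarith [add_one_le_exp x]
    _ = (1 + 2 / x) ^ Fintype.card ι := by rw [prod_const, card_univ]

lemma summable_exp_neg_mul_l1 {x : ℝ} (hx : 0 < x) :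
    Summable fun k : ι → ℤ => exp (-x * ∑ i, |(k i : ℝ)|) :=
  summable_of_sum_le (fun _ => (exp_pos _).le) (sum_exp_neg_mul_l1_le hx)

lemma one_le_sum_abs_of_ne_zero {k : ι → ℤ} (hk : k ≠ 0) : 1 ≤ ∑ i, |(k i : ℝ)| := by
  obtain ⟨i, hi⟩ := Function.ne_iff.mp hk
  calc (1 : ℝ) ≤ |(k i : ℝ)| := by exact_mod_cast Int.one_le_abs hi
    _ ≤ ∑ i, |(k i : ℝ)| := single_le_sum (fun j _ => abs_nonneg (k j : ℝ)) (mem_univ i)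

lemma sum_mul_ne_zero_of_diophantine {ω : ι → ℝ} {k : ι → ℤ} {γ τ : ℝ} (hγ : 0 < γ) (hk : k ≠ 0)
    (hdio : γ / (∑ i, |(k i : ℝ)|) ^ τ ≤ |∑ i, (k i : ℝ) * ω i|) :
    ∑ i, (k i : ℝ) * ω i ≠ 0 := by
  have hw := one_le_sum_abs_of_ne_zero hk
  exact abs_pos.mp (hdio.trans_lt' (by positivity))

theorem exists_tsum_rpow_l1_mul_exp_neg_le {τ : ℝ} (hτ : 0 ≤ τ) :
    ∃ C > 0, ∀ σ > 0,
      Summable (fun k : {k : ι → ℤ // k ≠ 0} =>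
        (∑ i, |(k.1 i : ℝ)|) ^ τ * exp (-σ * ∑ i, |(k.1 i : ℝ)|)) ∧
      ∑' k : {k : ι → ℤ // k ≠ 0}, (∑ i, |(k.1 i : ℝ)|) ^ τ * exp (-σ * ∑ i, |(k.1 i : ℝ)|)
        ≤ C * σ ^ (-(τ + Fintype.card ι)) := by
  set d := Fintype.card ι
  have hA : 0 < (τ / exp 1) ^ τ := by
    rcases hτ.eq_or_lt with rfl | hτ
    · simp
    · positivity
  refine ⟨(τ / exp 1) ^ τ * 2 ^ τ * exp 2 * d.factorial * 4 ^ d, by positivity, fun σ hσ => ?_⟩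
  set w : {k : ι → ℤ // k ≠ 0} → ℝ := fun k => ∑ i, |(k.1 i : ℝ)|
  set B := (τ / exp 1) ^ τ * (σ / 2) ^ (-τ) * exp (-(σ / 4))
  have hterm (k : {k : ι → ℤ // k ≠ 0}) : w k ^ τ * exp (-σ * w k) ≤ B * exp (-(σ / 4) * w k) :=
    rpow_mul_exp_neg_le_of_one_le hτ hσ (one_le_sum_abs_of_ne_zero k.2)
  have hgeom (F : Finset {k : ι → ℤ // k ≠ 0}) :
      ∑ k ∈ F, exp (-(σ / 4) * w k) ≤ (1 + 2 / (σ / 4)) ^ d := by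
    simpa using
      sum_exp_neg_mul_l1_le (by positivity : 0 < σ / 4) (F.map (Function.Embedding.subtype _))
  have hsg : Summable fun k => exp (-(σ / 4) * w k) :=
    summable_of_sum_le (fun _ => (exp_pos _).le) hgeom
  have hsum : Summable fun k => w k ^ τ * exp (-σ * w k) :=
    (hsg.mul_left B).of_nonneg_of_le (fun k => by positivity) hterm
  refine ⟨hsum, ?_⟩
  calc ∑' k, w k ^ τ * exp (-σ * w k) ≤ ∑' k, B * exp (-(σ / 4) * w k) :=
        hsum.tsum_le_tsum hterm (hsg.mul_left B)
    _ = B * ∑' k, exp (-(σ / 4) * w k) := tsum_mul_left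
    _ ≤ B * (1 + 2 / (σ / 4)) ^ d := by gcongr; exact hsg.tsum_le_of_sum_le hgeom
    _ = (τ / exp 1) ^ τ * (σ / 2) ^ (-τ) * (exp (-(σ / 4)) * (1 + 2 / (σ / 4)) ^ d) := by ring
    _ ≤ (τ / exp 1) ^ τ * (σ / 2) ^ (-τ) * (exp 2 * d.factorial * (σ / 4) ^ (-(d : ℝ))) :=
        mul_le_mul_of_nonneg_left (exp_neg_mul_one_add_two_div_pow_le (by positivity) d)
          (by positivity)
    _ = _ := by
        rw [div_rpow hσ.le (by norm_num), div_rpow hσ.le (by norm_num), neg_add, rpow_add hσ,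
          rpow_neg (by norm_num : (0 : ℝ) ≤ 2), rpow_neg (by norm_num : (0 : ℝ) ≤ 4), rpow_natCast]
        field_simp

end LatticeSums

lemma norm_cexp_I_mul_sum {ι : Type*} [Fintype ι] (k : ι → ℤ) (z : ι → ℂ) :
    ‖Complex.exp (Complex.I * ∑ i, (k i : ℂ) * z i)‖ = exp (-∑ i, (k i : ℝ) * (z i).im) := by
  simp [Complex.norm_exp, Complex.mul_re, Complex.im_sum]

lemma norm_homTerm {d : ℕ} (ω₀ : Fin d → ℝ) (a : (Fin d → ℤ) → ℂ) (k : Fin d → ℤ)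
    (z : Fin d → ℂ) :
    ‖homTerm d ω₀ a k z‖
      = ‖a k‖ / |∑ i, (k i : ℝ) * ω₀ i| * exp (-∑ i, (k i : ℝ) * (z i).im) := by
  have h : ∑ i, (k i : ℂ) * (ω₀ i : ℂ) = ((∑ i, (k i : ℝ) * ω₀ i : ℝ) : ℂ) := by push_cast; rfl
  rw [homTerm, norm_mul, norm_div, norm_cexp_I_mul_sum, h, norm_mul, Complex.norm_I, one_mul,
    Complex.norm_real, Real.norm_eq_abs]

lemma norm_homTerm_le {d : ℕ} {ω₀ : Fin d → ℝ} {a : (Fin d → ℤ) → ℂ} {k : Fin d → ℤ}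
    {γ₀ τ₀ s σ M : ℝ} (hγ₀ : 0 < γ₀) (hk : k ≠ 0)
    (hdio : γ₀ / (∑ i, |(k i : ℝ)|) ^ τ₀ ≤ |∑ i, (k i : ℝ) * ω₀ i|)
    (ha : ‖a k‖ ≤ M * exp (-s * ∑ i, |(k i : ℝ)|)) {z : Fin d → ℂ}
    (hz : ∀ j, |(z j).im| ≤ s - σ) :
    ‖homTerm d ω₀ a k z‖
      ≤ M / γ₀ * ((∑ i, |(k i : ℝ)|) ^ τ₀ * exp (-σ * ∑ i, |(k i : ℝ)|)) := by
  set w := ∑ i, |(k i : ℝ)|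
  have hw : 0 < w := zero_lt_one.trans_le (one_le_sum_abs_of_ne_zero hk)
  have hM : 0 ≤ M := nonneg_of_mul_nonneg_left ((norm_nonneg _).trans ha) (exp_pos _)
  have hexp : exp (-∑ i, (k i : ℝ) * (z i).im) ≤ exp ((s - σ) * w) := by
    rw [exp_le_exp, ← sum_neg_distrib, mul_sum]
    refine sum_le_sum fun i _ => ?_
    calc -((k i : ℝ) * (z i).im) ≤ |(k i : ℝ)| * |(z i).im| := abs_mul (k i : ℝ) _ ▸ neg_le_abs _
      _ ≤ (s - σ) * |(k i : ℝ)| := by rw [mul_comm]; gcongr; exact hz i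
  calc ‖homTerm d ω₀ a k z‖
      = ‖a k‖ / |∑ i, (k i : ℝ) * ω₀ i| * exp (-∑ i, (k i : ℝ) * (z i).im) := norm_homTerm ..
    _ ≤ M * exp (-s * w) / (γ₀ / w ^ τ₀) * exp ((s - σ) * w) := by gcongr
    _ = M / γ₀ * (w ^ τ₀ * exp (-σ * w)) := by
        rw [show -σ * w = -s * w + (s - σ) * w by ring, exp_add]
        field_simp

lemma hasDerivAt_homTerm_line {d : ℕ} (ω₀ : Fin d → ℝ) (a : (Fin d → ℤ) → ℂ) {k : Fin d → ℤ}
    (hω : ∑ i, (k i : ℝ) * ω₀ i ≠ 0) (x : Fin d → ℝ) (t : ℝ) :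
    HasDerivAt (fun t : ℝ => homTerm d ω₀ a k fun i => (x i : ℂ) + (t : ℂ) * (ω₀ i : ℂ))
      (a k * Complex.exp (Complex.I * ∑ i, (k i : ℂ) * ((x i : ℂ) + (t : ℂ) * (ω₀ i : ℂ)))) t := by
  set A : ℂ := Complex.I * ∑ i, (k i : ℂ) * (x i : ℂ)
  set B : ℂ := Complex.I * ∑ i, (k i : ℂ) * (ω₀ i : ℂ)
  have hB : B ≠ 0 := mul_ne_zero Complex.I_ne_zero (by exact_mod_cast hω)
  have hline (t : ℝ) :
      Complex.I * ∑ i, (k i : ℂ) * ((x i : ℂ) + (t : ℂ) * (ω₀ i : ℂ)) = A + t * B := by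
    simp only [A, B, mul_add, sum_add_distrib, mul_sum]
    congr 1
    exact sum_congr rfl fun i _ => by ring
  have h := ((((hasDerivAt_mul_const B).const_add A).cexp).const_mul (a k / B)).comp_ofReal (z := t)
  simp only [homTerm, hline]
  convert h using 1
  field_simp

lemma hasDerivAt_tsum_homTerm_line {d : ℕ} {ω₀ : Fin d → ℝ} {a : (Fin d → ℤ) → ℂ}
    (hω : ∀ k : {k : Fin d → ℤ // k ≠ 0}, ∑ i, (k.1 i : ℝ) * ω₀ i ≠ 0)
    (ha : Summable fun k : {k : Fin d → ℤ // k ≠ 0} => ‖a k.1‖) (x : Fin d → ℝ)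
    (hx : Summable fun k : {k : Fin d → ℤ // k ≠ 0} => homTerm d ω₀ a k.1 fun i => (x i : ℂ)) :
    HasDerivAt
      (fun t : ℝ => ∑' k : {k : Fin d → ℤ // k ≠ 0},
        homTerm d ω₀ a k.1 fun i => (x i : ℂ) + (t : ℂ) * (ω₀ i : ℂ))
      (∑' k : {k : Fin d → ℤ // k ≠ 0},
        a k.1 * Complex.exp (Complex.I * ∑ i, (k.1 i : ℂ) * (x i : ℂ))) 0 := by
  have h := hasDerivAt_tsum ha (fun k => hasDerivAt_homTerm_line ω₀ a (hω k) x)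
    (fun k t => by simp [norm_cexp_I_mul_sum]) (y₀ := 0) (by simpa using hx) 0
  simpa using h

/-- Solution of the homological equation with Diophantine frequency
`ω₀ ∈ DC(γ₀, τ₀)`: the series `u(z) = -∑_{k≠0} a_k (i⟨k,ω₀⟩)⁻¹ e^{i⟨k,z⟩}` converges
absolutely and uniformly on the strip `|Im z_j| ≤ s - σ`, and is bounded there by
`C M γ₀⁻¹ σ^{-(τ₀+d)}` with `C` depending only on `d` and `τ₀`; moreover, on the reals,
`∑_j ω₀_j ∂_{x_j} u(x) = -∑_{k≠0} a_k e^{i⟨k,x⟩}`, both series converging absolutely. -/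
theorem stmt_2 (d : ℕ) (hd : 1 ≤ d) (τ₀ : ℝ) (hτ : (d : ℝ) - 1 < τ₀) :
    ∃ C : ℝ, 0 < C ∧
      ∀ γ₀ : ℝ, 0 < γ₀ → γ₀ < 1 →
      ∀ ω₀ : Fin d → ℝ,
        (∀ k : Fin d → ℤ, k ≠ 0 →
          γ₀ / (∑ i, |(k i : ℝ)|) ^ τ₀ ≤ |∑ i, (k i : ℝ) * ω₀ i|) →
      ∀ s M : ℝ, 0 < s → 0 < M →
      ∀ a : (Fin d → ℤ) → ℂ,
        (∀ k : Fin d → ℤ, k ≠ 0 → ‖a k‖ ≤ M * Real.exp (-s * ∑ i, |(k i : ℝ)|)) →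
      ∀ σ : ℝ, 0 < σ → σ < s →
        -- (i) absolute and uniform convergence on the closed strip, with the bound
        ((∃ g : {k : Fin d → ℤ // k ≠ 0} → ℝ, Summable g ∧
            ∀ (k : {k : Fin d → ℤ // k ≠ 0}) (z : Fin d → ℂ),
              (∀ j, |(z j).im| ≤ s - σ) → ‖homTerm d ω₀ a k.1 z‖ ≤ g k) ∧
          ∀ z : Fin d → ℂ, (∀ j, |(z j).im| ≤ s - σ) →
            Summable (fun k : {k : Fin d → ℤ // k ≠ 0} => ‖homTerm d ω₀ a k.1 z‖) ∧
            ‖-∑' k : {k : Fin d → ℤ // k ≠ 0}, homTerm d ω₀ a k.1 z‖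
              ≤ C * M / γ₀ * σ ^ (-(τ₀ + (d : ℝ)))) ∧
        -- (ii) the homological equation holds on the reals
        (∀ x : Fin d → ℝ,
          Summable (fun k : {k : Fin d → ℤ // k ≠ 0} =>
            ‖a k.1 * Complex.exp (Complex.I * ∑ i, (k.1 i : ℂ) * (x i : ℂ))‖) ∧
          HasDerivAt
            (fun t : ℝ => -∑' k : {k : Fin d → ℤ // k ≠ 0},
              homTerm d ω₀ a k.1 (fun i => ((x i : ℂ) + (t : ℂ) * (ω₀ i : ℂ))))
            (-∑' k : {k : Fin d → ℤ // k ≠ 0},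
              a k.1 * Complex.exp (Complex.I * ∑ i, (k.1 i : ℂ) * (x i : ℂ))) 0) := by
  obtain ⟨C, hC, hlattice⟩ := exists_tsum_rpow_l1_mul_exp_neg_le (ι := Fin d) (τ := τ₀)
    (by linarith [show (1 : ℝ) ≤ d by exact_mod_cast hd])
  refine ⟨C, hC, fun γ₀ hγ₀ _ ω₀ hdio s M hs _ a ha σ hσ hσs => ?_⟩
  obtain ⟨hsum, htsum⟩ := hlattice σ hσ
  rw [Fintype.card_fin] at htsum
  have hg := hsum.mul_left (M / γ₀)
  have hbound (k : {k : Fin d → ℤ // k ≠ 0}) (z : Fin d → ℂ) (hz : ∀ j, |(z j).im| ≤ s - σ) :=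
    norm_homTerm_le hγ₀ k.2 (hdio k.1 k.2) (ha k.1 k.2) hz
  have hnorm_summable (z : Fin d → ℂ) (hz : ∀ j, |(z j).im| ≤ s - σ) :=
    hg.of_nonneg_of_le (fun _ => norm_nonneg _) (hbound · z hz)
  refine ⟨⟨⟨_, hg, hbound⟩, fun z hz => ⟨hnorm_summable z hz, ?_⟩⟩, fun x => ?_⟩
  · rw [norm_neg]
    calc _ ≤ _ := tsum_of_norm_bounded hg.hasSum (hbound · z hz)
      _ ≤ M / γ₀ * (C * σ ^ (-(τ₀ + d))) := by rw [tsum_mul_left]; gcongr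
      _ = C * M / γ₀ * σ ^ (-(τ₀ + d)) := by ring
  · have hcoef : Summable fun k : {k : Fin d → ℤ // k ≠ 0} => ‖a k.1‖ :=
      (((summable_exp_neg_mul_l1 hs).comp_injective Subtype.val_injective).mul_left M
        ).of_nonneg_of_le (fun _ => norm_nonneg _) fun k => ha k.1 k.2
    have hreal : Summable fun k : {k : Fin d → ℤ // k ≠ 0} =>
        homTerm d ω₀ a k.1 fun i => (x i : ℂ) :=
      (hnorm_summable _ fun j => by simpa using (sub_pos.2 hσs).le).of_norm
    refine ⟨by simpa [norm_cexp_I_mul_sum] using hcoef, ?_⟩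
    exact (hasDerivAt_tsum_homTerm_line
      (fun k => sum_mul_ne_zero_of_diophantine hγ₀ k.2 (hdio k.1 k.2)) hcoef x hreal).neg
end

section
/- Let d ≥ 1, τ > d − 1, 0 < γ < 1, ℓ ∈ ℕ, and let l̃ : ℝ → ℝ be C^∞ with L := sup{|l̃^{(p)}(x)| : x ∈ ℝ, 0 ≤ p ≤ ℓ} finite. Let 0 < s' < s, M > 0, and for each nonzero k ∈ ℤ^d let a_k : ℝ^d → ℂ be a C^ℓ function such that for every n with 0 ≤ n ≤ ℓ and every η ∈ ℝ^d the norm of the n-th iterated Fréchet derivative of a_k at η is at most M e^{−s|k|₁}. Then for every z ∈ ℂ^d with |Im z_j| ≤ s' for all j and every η ∈ ℝ^d the series (P_{γ,τ}f)(z,η) := ∑_{k≠0} a_k(η) e^{i⟨k,z⟩} l̃(⟨k,η⟩|k|₁^τ/γ) converges absolutely, and there exists a constant C depending only on d, τ, ℓ and L such that for every n with 0 ≤ n ≤ ℓ, the norm of the n-th iterated Fréchet derivative in η of P_{γ,τ}f is bounded on this set by C · γ^{−ℓ} · (s − s')^{−((τ+1)ℓ+d)} · M. -/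
open scoped BigOperators

/-- The `k`-th term of the series defining the cut-off operator `P_{γ,τ} f`, where
`a k η` plays the role of the Fourier coefficient `f̂(k, η)`. -/
noncomputable def cutoffTerm (d : ℕ) (τ γ : ℝ) (ltil : ℝ → ℝ)
    (a : (Fin d → ℤ) → (Fin d → ℝ) → ℂ) (k : Fin d → ℤ) (z : Fin d → ℂ)
    (η : Fin d → ℝ) : ℂ :=
  a k η * Complex.exp (Complex.I * ∑ i, (k i : ℂ) * z i) *
    ((ltil ((∑ i, (k i : ℝ) * η i) * (∑ i, |(k i : ℝ)|) ^ τ / γ) : ℝ) : ℂ)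

/-- The cut-off (flat) operator `P_{γ,τ}` applied to `f`, as a function of `(z, η)`. -/
noncomputable def cutoffOp (d : ℕ) (τ γ : ℝ) (ltil : ℝ → ℝ)
    (a : (Fin d → ℤ) → (Fin d → ℝ) → ℂ) (z : Fin d → ℂ) (η : Fin d → ℝ) : ℂ :=
  ∑' k : {k : Fin d → ℤ // k ≠ 0}, cutoffTerm d τ γ ltil a k.1 z η

/-! Each term of the series is `e^{i⟨k,z⟩} · l̃(ψ_k η) · a_k(η)` with `ψ_k` linear of norm at most
`|k|₁^{τ+1}/γ`, so by the Leibniz rule its `n`-th derivative in `η` is at most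
`2^ℓ L M γ^{-ℓ} |k|₁^{(τ+1)ℓ} e^{-(s-s')|k|₁}` on the strip `|Im z| ≤ s'`. These bounds are summable,
so the series may be differentiated term by term, and the lattice sum
`∑_{k≠0} |k|₁^A e^{-σ|k|₁}` is `O(σ^{-(A+d)})`: split `e^{-σt} = e^{-σt/2} e^{-σt/2}`, absorb
`t^B` (`B = A` for `σ ≤ 1`, `B = A + d` for `σ ≥ 1`, using `|k|₁ ≥ 1`) into the first factor via
`t^B e^{-σt/2} ≤ (2B/σ)^B`, and sum the second one as a product of one-dimensional geometric
series: `∑_{k ∈ ℤ^d} e^{-x|k|₁} = coth(x/2)^d ≤ (1 + 2/x)^d`. -/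

open Real

theorem HasSum.fin_pi_prod {ι : Type*} {f : ι → ℝ} {a : ℝ} (hf : HasSum f a) (hf₀ : 0 ≤ f)
    (d : ℕ) : HasSum (fun k : Fin d → ι => ∏ i, f (k i)) (a ^ d) := by
  induction d with
  | zero => simp
  | succ n ih =>
    have hs := hf.summable.mul_of_nonneg ih.summable hf₀
      fun k => Finset.prod_nonneg fun i _ => hf₀ (k i)
    have hprod := HasSum.mul hf ih hs
    refine (Equiv.hasSum_iff (Fin.consEquiv fun _ => ι)).1 ?_
    rw [pow_succ']
    refine hprod.congr_fun fun p => ?_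
    simp [Fin.prod_univ_succ]

theorem hasSum_pow_natAbs {r : ℝ} (hr₀ : 0 ≤ r) (hr₁ : r < 1) :
    HasSum (fun m : ℤ => r ^ m.natAbs) ((1 + r) / (1 - r)) := by
  have hgeom := hasSum_geometric_of_lt_one hr₀ hr₁
  have hpos : HasSum (fun n : ℕ => r ^ ((n : ℤ)).natAbs) (1 - r)⁻¹ := by
    simpa using hgeom
  have hneg : HasSum (fun n : ℕ => r ^ (-((n : ℤ) + 1)).natAbs) (r * (1 - r)⁻¹) :=
    (hgeom.mul_left r).congr_fun fun n => by rw [← pow_succ']; congr 1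
  have hsum : (1 + r) / (1 - r) = (1 - r)⁻¹ + r * (1 - r)⁻¹ := by
    field_simp [(sub_pos.2 hr₁).ne']
  rw [hsum]
  exact hpos.of_nat_of_neg_add_one hneg

theorem one_add_exp_neg_div_le {x : ℝ} (hx : 0 < x) :
    (1 + exp (-x)) / (1 - exp (-x)) ≤ 1 + 2 / x := by
  have hx' : x ≤ exp x - 1 := by linarith [add_one_le_exp x]
  have : (1 + exp (-x)) / (1 - exp (-x)) = 1 + 2 / (exp x - 1) := by
    rw [exp_neg]
    field_simp [(hx.trans_le hx').ne']
    ring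
  rw [this]
  gcongr

theorem rpow_mul_exp_neg_mul_le {B x t : ℝ} (hB : 0 ≤ B) (hx : 0 < x) (ht : 0 ≤ t) :
    t ^ B * exp (-(x * t)) ≤ (B / x) ^ B := by
  rcases hB.eq_or_lt with rfl | hB
  · simpa using mul_nonneg hx.le ht
  rw [exp_neg, ← div_eq_mul_inv, div_le_iff₀ (exp_pos _)]
  calc t ^ B = (B / x * (x * t / B)) ^ B := by congr 1; field_simp
    _ = (B / x) ^ B * (x * t / B) ^ B := mul_rpow (by positivity) (by positivity)
    _ ≤ (B / x) ^ B * exp (x * t / B) ^ B := by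
        gcongr
        linarith [add_one_le_exp (x * t / B)]
    _ = (B / x) ^ B * exp (x * t) := by rw [← exp_mul]; field_simp

section IteratedFDeriv

variable {𝕜 : Type*} [NontriviallyNormedField 𝕜] {E F G : Type*}
  [NormedAddCommGroup E] [NormedSpace 𝕜 E] [NormedAddCommGroup F] [NormedSpace 𝕜 F]
  [NormedAddCommGroup G] [NormedSpace 𝕜 G] {N : WithTop ℕ∞}

theorem norm_iteratedFDeriv_smul_le_of_forall_le {𝕜' : Type*} [NormedField 𝕜']
    [NormedAlgebra 𝕜 𝕜'] [NormedSpace 𝕜' F] [IsScalarTower 𝕜 𝕜' F]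
    {f : E → 𝕜'} {g : E → F} (hf : ContDiff 𝕜 N f) (hg : ContDiff 𝕜 N g) (x : E) {n : ℕ}
    (hn : n ≤ N) {A B : ℝ} (hA : ∀ i ≤ n, ‖iteratedFDeriv 𝕜 i f x‖ ≤ A)
    (hB : ∀ i ≤ n, ‖iteratedFDeriv 𝕜 i g x‖ ≤ B) :
    ‖iteratedFDeriv 𝕜 n (fun y => f y • g y) x‖ ≤ 2 ^ n * A * B := by
  have hA₀ : 0 ≤ A := (norm_nonneg _).trans (hA 0 n.zero_le)
  calc ‖iteratedFDeriv 𝕜 n (fun y => f y • g y) x‖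
      ≤ ∑ i ∈ Finset.range (n + 1), (n.choose i : ℝ) * ‖iteratedFDeriv 𝕜 i f x‖ *
          ‖iteratedFDeriv 𝕜 (n - i) g x‖ := norm_iteratedFDeriv_smul_le hf hg x hn
    _ ≤ ∑ i ∈ Finset.range (n + 1), (n.choose i : ℝ) * A * B := by
        gcongr with i hi
        · exact hA i (Finset.mem_range_succ_iff.1 hi)
        · exact hB _ (n.sub_le i)
    _ = 2 ^ n * A * B := by
        rw [← Finset.sum_mul, ← Finset.sum_mul, ← Nat.cast_sum, Nat.sum_range_choose]
        push_cast
        rfl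

theorem ContinuousLinearMap.norm_iteratedFDeriv_comp_right_le (g : G →L[𝕜] E) {f : E → F}
    (hf : ContDiff 𝕜 N f) (x : G) {i : ℕ} (hi : i ≤ N) :
    ‖iteratedFDeriv 𝕜 i (f ∘ g) x‖ ≤ ‖iteratedFDeriv 𝕜 i f (g x)‖ * ‖g‖ ^ i := by
  rw [g.iteratedFDeriv_comp_right hf x hi]
  simpa using ContinuousMultilinearMap.norm_compContinuousLinearMap_le _ fun _ : Fin i => g

end IteratedFDeriv

theorem norm_iteratedFDeriv_tsum_le {α 𝕜 E F : Type*} [NontriviallyNormedField 𝕜]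
    [IsRCLikeNormedField 𝕜] [NormedAddCommGroup E] [NormedSpace 𝕜 E] [NormedAddCommGroup F]
    [NormedSpace 𝕜 F] [CompleteSpace F] {f : α → E → F} {v : α → ℝ} {N : ℕ∞}
    (hf : ∀ i, ContDiff 𝕜 N (f i)) (hv : Summable v)
    (hfv : ∀ (m : ℕ) (i : α) (x : E), (m : ℕ∞) ≤ N → ‖iteratedFDeriv 𝕜 m (f i) x‖ ≤ v i)
    {n : ℕ} (hn : (n : ℕ∞) ≤ N) (x : E) :
    ‖iteratedFDeriv 𝕜 n (fun y => ∑' i, f i y) x‖ ≤ ∑' i, v i := by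
  have hbound := fun i => hfv n i x hn
  have hnorm := hv.of_nonneg_of_le (fun _ => norm_nonneg _) hbound
  rw [iteratedFDeriv_tsum_apply hf (fun _ _ => hv) hfv hn]
  exact (norm_tsum_le_tsum_norm hnorm).trans (hnorm.tsum_le_tsum hbound hv)

noncomputable def dotProductCLM {d : ℕ} (c : Fin d → ℝ) : (Fin d → ℝ) →L[ℝ] ℝ :=
  ∑ i, c i • ContinuousLinearMap.proj i

theorem dotProductCLM_apply {d : ℕ} (c η : Fin d → ℝ) :
    dotProductCLM c η = ∑ i, c i * η i := by
  simp [dotProductCLM]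

theorem norm_dotProductCLM_le {d : ℕ} (c : Fin d → ℝ) : ‖dotProductCLM c‖ ≤ ∑ i, |c i| := by
  refine ContinuousLinearMap.opNorm_le_bound _ (Finset.sum_nonneg fun i _ => abs_nonneg _)
    fun η => ?_
  rw [dotProductCLM_apply, Real.norm_eq_abs, Finset.sum_mul]
  refine (Finset.abs_sum_le_sum_abs _ _).trans (Finset.sum_le_sum fun i _ => ?_)
  rw [abs_mul]
  gcongr
  exact norm_le_pi_norm η i

noncomputable def l1Norm {d : ℕ} (k : Fin d → ℤ) : ℝ := ∑ i, |(k i : ℝ)|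

theorem one_le_l1Norm {d : ℕ} {k : Fin d → ℤ} (hk : k ≠ 0) : 1 ≤ l1Norm k := by
  obtain ⟨i, hi⟩ := Function.ne_iff.1 hk
  calc (1 : ℝ) ≤ |(k i : ℝ)| := by exact_mod_cast Int.one_le_abs hi
    _ ≤ l1Norm k := Finset.single_le_sum (f := fun j => |(k j : ℝ)|)
        (fun j _ => abs_nonneg _) (Finset.mem_univ i)

theorem l1Norm_nonneg {d : ℕ} (k : Fin d → ℤ) : 0 ≤ l1Norm k :=
  Finset.sum_nonneg fun _ _ => abs_nonneg _

theorem exp_neg_mul_l1Norm {d : ℕ} (x : ℝ) (k : Fin d → ℤ) :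
    exp (-(x * l1Norm k)) = ∏ i, exp (-x) ^ (k i).natAbs := by
  simp_rw [← exp_nat_mul, ← exp_sum, l1Norm, Finset.mul_sum, ← Finset.sum_neg_distrib,
    Nat.cast_natAbs, Int.cast_abs]
  exact congrArg exp (Finset.sum_congr rfl fun _ _ => by ring)

theorem hasSum_exp_neg_mul_l1Norm (d : ℕ) {x : ℝ} (hx : 0 < x) :
    HasSum (fun k : Fin d → ℤ => exp (-(x * l1Norm k)))
      (((1 + exp (-x)) / (1 - exp (-x))) ^ d) := by
  simp_rw [exp_neg_mul_l1Norm]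
  exact (hasSum_pow_natAbs (exp_pos _).le (exp_lt_one_iff.2 (by linarith))).fin_pi_prod
    (fun _ => by positivity) d

section LatticeSum

variable {d : ℕ} {A B σ : ℝ}

theorem rpow_l1Norm_mul_exp_le {k : Fin d → ℤ} (hk : k ≠ 0) (hAB : A ≤ B) (hB : 0 ≤ B)
    (hσ : 0 < σ) :
    l1Norm k ^ A * exp (-(σ * l1Norm k)) ≤ (2 * B / σ) ^ B * exp (-(σ / 2 * l1Norm k)) := by
  have hN := one_le_l1Norm hk
  have hsplit :
      exp (-(σ * l1Norm k)) = exp (-(σ / 2 * l1Norm k)) * exp (-(σ / 2 * l1Norm k)) := by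
    rw [← exp_add]; ring_nf
  rw [hsplit, ← mul_assoc]
  gcongr ?_ * _
  calc l1Norm k ^ A * exp (-(σ / 2 * l1Norm k))
      ≤ l1Norm k ^ B * exp (-(σ / 2 * l1Norm k)) := by gcongr
    _ ≤ (B / (σ / 2)) ^ B := rpow_mul_exp_neg_mul_le hB (by positivity) (by linarith)
    _ = (2 * B / σ) ^ B := by congr 1; field_simp

theorem summable_rpow_l1Norm_mul_exp (A : ℝ) (hσ : 0 < σ) :
    Summable fun k : {k : Fin d → ℤ // k ≠ 0} => l1Norm k.1 ^ A * exp (-(σ * l1Norm k.1)) := by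
  have hdom := ((hasSum_exp_neg_mul_l1Norm d (half_pos hσ)).summable.subtype {k | k ≠ 0}).mul_left
    ((2 * max A 0 / σ) ^ max A 0)
  refine hdom.of_nonneg_of_le (fun k => ?_) fun k => ?_
  · have := l1Norm_nonneg k.1
    positivity
  · exact rpow_l1Norm_mul_exp_le k.2 (le_max_left A 0) (le_max_right A 0) hσ

theorem tsum_rpow_l1Norm_mul_exp_le_of_le (hAB : A ≤ B) (hB : 0 ≤ B) (hσ : 0 < σ) :
    ∑' k : {k : Fin d → ℤ // k ≠ 0}, l1Norm k.1 ^ A * exp (-(σ * l1Norm k.1))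
      ≤ (2 * B / σ) ^ B * (1 + 4 / σ) ^ d := by
  have hexp := hasSum_exp_neg_mul_l1Norm d (half_pos hσ)
  calc ∑' k : {k : Fin d → ℤ // k ≠ 0}, l1Norm k.1 ^ A * exp (-(σ * l1Norm k.1))
      ≤ ∑' k : {k : Fin d → ℤ // k ≠ 0}, (2 * B / σ) ^ B * exp (-(σ / 2 * l1Norm k.1)) :=
        (summable_rpow_l1Norm_mul_exp A hσ).tsum_le_tsum
          (fun k => rpow_l1Norm_mul_exp_le k.2 hAB hB hσ)
          ((hexp.summable.subtype {k | k ≠ 0}).mul_left _)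
    _ = (2 * B / σ) ^ B * ∑' k : {k : Fin d → ℤ // k ≠ 0}, exp (-(σ / 2 * l1Norm k.1)) :=
        tsum_mul_left
    _ ≤ (2 * B / σ) ^ B * ∑' k : Fin d → ℤ, exp (-(σ / 2 * l1Norm k)) := by
        gcongr
        exact hexp.summable.tsum_subtype_le _ {k | k ≠ 0} fun _ => (exp_pos _).le
    _ ≤ (2 * B / σ) ^ B * (1 + 4 / σ) ^ d := by
        rw [hexp.tsum_eq]
        have hbase := one_add_exp_neg_div_le (half_pos hσ)
        rw [show 2 / (σ / 2) = 4 / σ by ring] at hbase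
        gcongr
        exact div_nonneg (by positivity) (sub_nonneg.2 (exp_le_one_iff.2 (by linarith)))

theorem tsum_rpow_l1Norm_mul_exp_le (hA : 0 ≤ A) (hσ : 0 < σ) :
    ∑' k : {k : Fin d → ℤ // k ≠ 0}, l1Norm k.1 ^ A * exp (-(σ * l1Norm k.1))
      ≤ ((2 * A) ^ A + (2 * (A + d)) ^ (A + d)) * 5 ^ d * σ ^ (-(A + d)) := by
  have hrpow : ∀ B, 0 ≤ B → (2 * B / σ) ^ B = (2 * B) ^ B * σ ^ (-B) := fun B hB => by
    rw [div_rpow (by positivity) hσ.le, rpow_neg hσ.le, div_eq_mul_inv]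
  have hsplit : σ ^ (-(A + d)) = σ ^ (-A) * (σ ^ d)⁻¹ := by
    rw [neg_add, rpow_add hσ, rpow_neg hσ.le (d : ℝ), rpow_natCast]
  rcases le_total σ 1 with hσ1 | hσ1
  · calc _ ≤ (2 * A / σ) ^ A * (1 + 4 / σ) ^ d :=
          tsum_rpow_l1Norm_mul_exp_le_of_le le_rfl hA hσ
      _ ≤ (2 * A / σ) ^ A * (5 / σ) ^ d := by
          gcongr
          have : 1 ≤ 1 / σ := one_le_one_div hσ hσ1
          linarith [show 5 / σ = 1 / σ + 4 / σ by ring]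
      _ = (2 * A) ^ A * 5 ^ d * σ ^ (-(A + d)) := by
          rw [hrpow A hA, hsplit, div_pow, div_eq_mul_inv]; ring
      _ ≤ _ := by gcongr; exact le_add_of_nonneg_right (by positivity)
  · have hAd : 0 ≤ A + d := by positivity
    calc _ ≤ (2 * (A + d) / σ) ^ (A + d) * (1 + 4 / σ) ^ d :=
          tsum_rpow_l1Norm_mul_exp_le_of_le (by linarith [(Nat.cast_nonneg d : (0:ℝ) ≤ d)])
            hAd hσ
      _ ≤ (2 * (A + d) / σ) ^ (A + d) * 5 ^ d := by
          gcongr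
          linarith [div_le_self (show (0:ℝ) ≤ 4 by norm_num) hσ1]
      _ = (2 * (A + d)) ^ (A + d) * 5 ^ d * σ ^ (-(A + d)) := by
          rw [hrpow _ hAd]; ring
      _ ≤ _ := by gcongr; exact le_add_of_nonneg_left (by positivity)

end LatticeSum

theorem norm_exp_I_mul_sum_le {d : ℕ} (k : Fin d → ℤ) {z : Fin d → ℂ} {s' : ℝ}
    (hz : ∀ j, |(z j).im| ≤ s') :
    ‖Complex.exp (Complex.I * ∑ i, (k i : ℂ) * z i)‖ ≤ exp (s' * l1Norm k) := by
  rw [Complex.norm_exp, exp_le_exp]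
  have hre : (Complex.I * ∑ i, (k i : ℂ) * z i).re = -∑ i, (k i : ℝ) * (z i).im := by
    simp [Complex.mul_re, Complex.im_sum, Complex.mul_im]
  rw [hre, l1Norm, Finset.mul_sum, ← Finset.sum_neg_distrib]
  refine Finset.sum_le_sum fun i _ => ?_
  calc -((k i : ℝ) * (z i).im) ≤ |(k i : ℝ)| * |(z i).im| := by
        rw [← abs_mul]; exact neg_le_abs _
    _ ≤ s' * |(k i : ℝ)| := by rw [mul_comm]; gcongr; exact hz i

noncomputable def cutoffArg {d : ℕ} (τ γ : ℝ) (k : Fin d → ℤ) : (Fin d → ℝ) →L[ℝ] ℝ :=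
  dotProductCLM fun i => (k i : ℝ) * (l1Norm k ^ τ / γ)

section CutoffTerm

variable {d ℓ : ℕ} {τ γ : ℝ} {ltil : ℝ → ℝ} {a : (Fin d → ℤ) → (Fin d → ℝ) → ℂ}
  {k : Fin d → ℤ} {z : Fin d → ℂ}

theorem cutoffTerm_eq_smul :
    (fun η => cutoffTerm d τ γ ltil a k z η) = fun η =>
      Complex.exp (Complex.I * ∑ i, (k i : ℂ) * z i) • (ltil (cutoffArg τ γ k η) • a k η) := by
  funext η
  have harg : cutoffArg τ γ k η = (∑ i, (k i : ℝ) * η i) * (∑ i, |(k i : ℝ)|) ^ τ / γ := by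
    rw [cutoffArg, dotProductCLM_apply, mul_div_assoc, Finset.sum_mul]
    exact Finset.sum_congr rfl fun i _ => by rw [l1Norm]; ring
  rw [cutoffTerm, harg, Complex.real_smul, smul_eq_mul]
  ring

theorem norm_cutoffArg_le (hγ : 0 < γ) (hk : k ≠ 0) :
    ‖cutoffArg τ γ k‖ ≤ l1Norm k ^ (τ + 1) / γ := by
  have hN := zero_lt_one.trans_le (one_le_l1Norm hk)
  refine (norm_dotProductCLM_le _).trans_eq ?_
  simp_rw [abs_mul, abs_of_nonneg (by positivity : 0 ≤ l1Norm k ^ τ / γ), ← Finset.sum_mul]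
  rw [rpow_add_one hN.ne']
  simp only [l1Norm]
  ring

theorem contDiff_cutoffTerm (hsm : ContDiff ℝ ℓ ltil) (ha : ContDiff ℝ ℓ (a k)) :
    ContDiff ℝ ℓ (fun η => cutoffTerm d τ γ ltil a k z η) := by
  rw [cutoffTerm_eq_smul]
  exact ((hsm.comp (cutoffArg τ γ k).contDiff).smul ha).const_smul _

theorem norm_iteratedFDeriv_cutoffTerm_le (hsm : ContDiff ℝ ℓ ltil) {L : ℝ}
    (hL : ∀ p ≤ ℓ, ∀ x : ℝ, |iteratedDeriv p ltil x| ≤ L) (hτ : -1 ≤ τ) (hγ₀ : 0 < γ)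
    (hγ₁ : γ ≤ 1) {s' s M : ℝ} (ha : ContDiff ℝ ℓ (a k))
    (hab : ∀ n ≤ ℓ, ∀ η, ‖iteratedFDeriv ℝ n (a k) η‖ ≤ M * exp (-s * l1Norm k))
    (hk : k ≠ 0) (hz : ∀ j, |(z j).im| ≤ s') {n : ℕ} (hn : n ≤ ℓ) (η : Fin d → ℝ) :
    ‖iteratedFDeriv ℝ n (fun η => cutoffTerm d τ γ ltil a k z η) η‖ ≤
      2 ^ ℓ * L * M * γ ^ (-(ℓ : ℝ)) *
        (l1Norm k ^ ((τ + 1) * ℓ) * exp (-((s - s') * l1Norm k))) := by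
  set N := l1Norm k
  have hN : 1 ≤ N := one_le_l1Norm hk
  set ψ := cutoffArg τ γ k
  have hK : 1 ≤ N ^ (τ + 1) / γ :=
    (one_le_rpow hN (by linarith)).trans (le_div_self (by positivity) hγ₀ hγ₁)
  have hn' : (n : WithTop ℕ∞) ≤ ℓ := by exact_mod_cast hn
  have hL₀ : 0 ≤ L := (abs_nonneg _).trans (hL 0 ℓ.zero_le 0)
  have hltil : ∀ i ≤ n, ‖iteratedFDeriv ℝ i (ltil ∘ ψ) η‖ ≤ L * (N ^ (τ + 1) / γ) ^ ℓ := by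
    intro i hi
    have hiℓ := hi.trans hn
    calc ‖iteratedFDeriv ℝ i (ltil ∘ ψ) η‖ ≤ ‖iteratedFDeriv ℝ i ltil (ψ η)‖ * ‖ψ‖ ^ i :=
          ψ.norm_iteratedFDeriv_comp_right_le hsm η (by exact_mod_cast hiℓ)
      _ ≤ L * (N ^ (τ + 1) / γ) ^ ℓ := by
          rw [norm_iteratedFDeriv_eq_norm_iteratedDeriv]
          exact mul_le_mul (hL i hiℓ _) ((pow_le_pow_left₀ (norm_nonneg _)
            (norm_cutoffArg_le hγ₀ hk) i).trans (pow_le_pow_right₀ hK hiℓ)) (by positivity) hL₀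
  have hprod := norm_iteratedFDeriv_smul_le_of_forall_le (hsm.comp ψ.contDiff) ha η hn'
    hltil fun i hi => hab i (hi.trans hn) η
  have hM₀ : 0 ≤ M * exp (-s * N) := (norm_nonneg _).trans (hab 0 ℓ.zero_le η)
  have hsmooth : ContDiff ℝ ℓ fun y => ltil (ψ y) • a k y := (hsm.comp ψ.contDiff).smul ha
  rw [cutoffTerm_eq_smul, iteratedFDeriv_const_smul_apply' (hsmooth.of_le hn').contDiffAt,
    norm_smul]
  calc _ ≤ exp (s' * N) * (2 ^ n * (L * (N ^ (τ + 1) / γ) ^ ℓ) * (M * exp (-s * N))) :=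
        mul_le_mul (norm_exp_I_mul_sum_le k hz) hprod (norm_nonneg _) (exp_pos _).le
    _ ≤ exp (s' * N) * (2 ^ ℓ * (L * (N ^ (τ + 1) / γ) ^ ℓ) * (M * exp (-s * N))) := by
        gcongr
        exact one_le_two
    _ = _ := by
        rw [div_pow, ← rpow_natCast (N ^ (τ + 1)), ← rpow_mul (by positivity), rpow_neg hγ₀.le,
          rpow_natCast, show -((s - s') * N) = s' * N + -s * N by ring, exp_add]
        ring

theorem summable_norm_cutoffTerm (hsm : ContDiff ℝ ℓ ltil) {L : ℝ}
    (hL : ∀ p ≤ ℓ, ∀ x : ℝ, |iteratedDeriv p ltil x| ≤ L) (hτ : -1 ≤ τ) (hγ₀ : 0 < γ)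
    (hγ₁ : γ ≤ 1) {s' s M : ℝ} (hs : s' < s) (ha : ∀ k, k ≠ 0 → ContDiff ℝ ℓ (a k))
    (hab : ∀ k, k ≠ 0 → ∀ n ≤ ℓ, ∀ η, ‖iteratedFDeriv ℝ n (a k) η‖ ≤ M * exp (-s * l1Norm k))
    (hz : ∀ j, |(z j).im| ≤ s') (η : Fin d → ℝ) :
    Summable fun k : {k : Fin d → ℤ // k ≠ 0} => ‖cutoffTerm d τ γ ltil a k.1 z η‖ :=
  ((summable_rpow_l1Norm_mul_exp _ (sub_pos.2 hs)).mul_left _).of_nonneg_of_le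
    (fun _ => norm_nonneg _) fun k => by
      simpa using norm_iteratedFDeriv_cutoffTerm_le hsm hL hτ hγ₀ hγ₁ (ha k.1 k.2)
        (hab k.1 k.2) k.2 hz ℓ.zero_le η

theorem norm_iteratedFDeriv_cutoffOp_le (hsm : ContDiff ℝ ℓ ltil) {L : ℝ}
    (hL : ∀ p ≤ ℓ, ∀ x : ℝ, |iteratedDeriv p ltil x| ≤ L) (hτ : -1 ≤ τ) (hγ₀ : 0 < γ)
    (hγ₁ : γ ≤ 1) {s' s M : ℝ} (hs : s' < s) (ha : ∀ k, k ≠ 0 → ContDiff ℝ ℓ (a k))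
    (hab : ∀ k, k ≠ 0 → ∀ n ≤ ℓ, ∀ η, ‖iteratedFDeriv ℝ n (a k) η‖ ≤ M * exp (-s * l1Norm k))
    (hz : ∀ j, |(z j).im| ≤ s') {n : ℕ} (hn : n ≤ ℓ) (η : Fin d → ℝ) :
    ‖iteratedFDeriv ℝ n (cutoffOp d τ γ ltil a z) η‖ ≤ 2 ^ ℓ * L * M * γ ^ (-(ℓ : ℝ)) *
      ∑' k : {k : Fin d → ℤ // k ≠ 0},
        l1Norm k.1 ^ ((τ + 1) * ℓ) * exp (-((s - s') * l1Norm k.1)) :=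
  (norm_iteratedFDeriv_tsum_le (N := ℓ)
    (f := fun (k : {k : Fin d → ℤ // k ≠ 0}) η => cutoffTerm d τ γ ltil a k.1 z η)
    (fun k => contDiff_cutoffTerm hsm (ha k.1 k.2))
    ((summable_rpow_l1Norm_mul_exp _ (sub_pos.2 hs)).mul_left _)
    (fun _ k η hm => norm_iteratedFDeriv_cutoffTerm_le hsm hL hτ hγ₀ hγ₁ (ha k.1 k.2)
      (hab k.1 k.2) k.2 hz (by exact_mod_cast hm) η)
    (by exact_mod_cast hn) η).trans_eq tsum_mul_left

end CutoffTerm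

theorem stmt_5_general (d : ℕ) (τ : ℝ) (hτ : (d : ℝ) - 1 < τ) (ℓ : ℕ)
    (ltil : ℝ → ℝ) (hsm : ContDiff ℝ (⊤ : ℕ∞) ltil) (L : ℝ)
    (hL : ∀ p ≤ ℓ, ∀ x : ℝ, |iteratedDeriv p ltil x| ≤ L) :
    ∃ C : ℝ, 0 < C ∧
      ∀ γ : ℝ, 0 < γ → γ < 1 →
      ∀ s' s M : ℝ, 0 < s' → s' < s → 0 < M →
      ∀ a : (Fin d → ℤ) → (Fin d → ℝ) → ℂ,
        (∀ k : Fin d → ℤ, k ≠ 0 → ContDiff ℝ (ℓ : ℕ∞) (a k)) →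
        (∀ k : Fin d → ℤ, k ≠ 0 → ∀ n ≤ ℓ, ∀ η : Fin d → ℝ,
          ‖iteratedFDeriv ℝ n (a k) η‖ ≤ M * Real.exp (-s * ∑ i, |(k i : ℝ)|)) →
        (∀ z : Fin d → ℂ, (∀ j, |(z j).im| ≤ s') → ∀ η : Fin d → ℝ,
          Summable (fun k : {k : Fin d → ℤ // k ≠ 0} =>
            ‖cutoffTerm d τ γ ltil a k.1 z η‖)) ∧
        (∀ n ≤ ℓ, ∀ z : Fin d → ℂ, (∀ j, |(z j).im| ≤ s') → ∀ η : Fin d → ℝ,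
          ‖iteratedFDeriv ℝ n (cutoffOp d τ γ ltil a z) η‖
            ≤ C * γ ^ (-(ℓ : ℝ)) * (s - s') ^ (-((τ + 1) * (ℓ : ℝ) + (d : ℝ))) * M) := by
  have hτ' : -1 ≤ τ := by linarith [(Nat.cast_nonneg d : (0 : ℝ) ≤ d)]
  have hsm' : ContDiff ℝ ℓ ltil := hsm.of_le (by exact_mod_cast le_top)
  set A := (τ + 1) * (ℓ : ℝ)
  have hA : 0 ≤ A := mul_nonneg (by linarith) ℓ.cast_nonneg
  set C₀ := ((2 * A) ^ A + (2 * (A + d)) ^ (A + d)) * 5 ^ d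
  have hL₀ : 0 ≤ L := (abs_nonneg _).trans (hL 0 ℓ.zero_le 0)
  refine ⟨2 ^ ℓ * (L + 1) * (C₀ + 1), by positivity, ?_⟩
  intro γ hγ₀ hγ₁ s' s M _ hs _ a ha hab
  refine ⟨fun z hz η => summable_norm_cutoffTerm hsm' hL hτ' hγ₀ hγ₁.le hs ha hab hz η,
    fun n hn z hz η => ?_⟩
  calc ‖iteratedFDeriv ℝ n (cutoffOp d τ γ ltil a z) η‖
      ≤ 2 ^ ℓ * L * M * γ ^ (-(ℓ : ℝ)) *
          ∑' k : {k : Fin d → ℤ // k ≠ 0}, l1Norm k.1 ^ A * exp (-((s - s') * l1Norm k.1)) :=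
        norm_iteratedFDeriv_cutoffOp_le hsm' hL hτ' hγ₀ hγ₁.le hs ha hab hz hn η
    _ ≤ 2 ^ ℓ * L * M * γ ^ (-(ℓ : ℝ)) * (C₀ * (s - s') ^ (-(A + d))) := by
        gcongr
        exact tsum_rpow_l1Norm_mul_exp_le hA (sub_pos.2 hs)
    _ = (2 ^ ℓ * L * C₀) * γ ^ (-(ℓ : ℝ)) * (s - s') ^ (-(A + d)) * M := by ring
    _ ≤ 2 ^ ℓ * (L + 1) * (C₀ + 1) * γ ^ (-(ℓ : ℝ)) * (s - s') ^ (-(A + d)) * M := by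
        gcongr <;> linarith

/-- Lemma 3.2 of the paper. The series defining `P_{γ,τ} f` converges
absolutely on the strip `|Im z_j| ≤ s'`, and its iterated Fréchet derivatives in `η` of
order `n ≤ ℓ` are bounded by `C γ^{-ℓ} (s-s')^{-((τ+1)ℓ+d)} M`, with `C` depending only
on `d`, `τ`, `ℓ` and `L`. -/
theorem stmt_5 (d : ℕ) (hd : 1 ≤ d) (τ : ℝ) (hτ : (d : ℝ) - 1 < τ) (ℓ : ℕ)
    (ltil : ℝ → ℝ) (hsm : ContDiff ℝ (⊤ : ℕ∞) ltil) (L : ℝ)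
    (hL : ∀ p ≤ ℓ, ∀ x : ℝ, |iteratedDeriv p ltil x| ≤ L) :
    ∃ C : ℝ, 0 < C ∧
      ∀ γ : ℝ, 0 < γ → γ < 1 →
      ∀ s' s M : ℝ, 0 < s' → s' < s → 0 < M →
      ∀ a : (Fin d → ℤ) → (Fin d → ℝ) → ℂ,
        (∀ k : Fin d → ℤ, k ≠ 0 → ContDiff ℝ (ℓ : ℕ∞) (a k)) →
        (∀ k : Fin d → ℤ, k ≠ 0 → ∀ n ≤ ℓ, ∀ η : Fin d → ℝ,
          ‖iteratedFDeriv ℝ n (a k) η‖ ≤ M * Real.exp (-s * ∑ i, |(k i : ℝ)|)) →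
        (∀ z : Fin d → ℂ, (∀ j, |(z j).im| ≤ s') → ∀ η : Fin d → ℝ,
          Summable (fun k : {k : Fin d → ℤ // k ≠ 0} =>
            ‖cutoffTerm d τ γ ltil a k.1 z η‖)) ∧
        (∀ n ≤ ℓ, ∀ z : Fin d → ℂ, (∀ j, |(z j).im| ≤ s') → ∀ η : Fin d → ℝ,
          ‖iteratedFDeriv ℝ n (cutoffOp d τ γ ltil a z) η‖
            ≤ C * γ ^ (-(ℓ : ℝ)) * (s - s') ^ (-((τ + 1) * (ℓ : ℝ) + (d : ℝ))) * M) :=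
  stmt_5_general d τ hτ ℓ ltil hsm L hL
end

section
/- Let d ≥ 1 and let ω₀ ∈ ℝ^d be nonzero. For each integer j ≥ 1 let P_j : ℝ^d → ℝ^d be a map each of whose components is a homogeneous polynomial of degree j, and set P_0(ξ) = ω₀ for all ξ. Assume the nondegeneracy condition: for every nonzero γ ∈ ℝ^d there exists j ≥ 0 such that the polynomial ξ ↦ ⟨γ, P_j(ξ)⟩ is not identically zero on ℝ^d. Then there exist p ∈ ℕ and σ > 0 such that for every unit vector e ∈ ℝ^d there exists a unit vector u ∈ ℝ^d with max_{0 ≤ j ≤ p} j! · |⟨e, P_j(u)⟩| ≥ σ. -/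
/-!
For a unit vector `e`, nondegeneracy gives some `j` and `x` with `⟨e, P_j(x)⟩ ≠ 0`, and by
homogeneity `x` may be rescaled to a unit vector `u`. The inequality `⟨e', P_j(u)⟩ ≠ 0`
persists, with a quantitative lower bound, for `e'` near `e`; compactness of the unit sphere
then lets finitely many pairs `(j, u)` serve all `e`, which yields uniform `p` and `σ`.
-/

open MvPolynomial

lemma MvPolynomial.IsHomogeneous.eval_smul {R σ : Type*} [CommSemiring R]
    {φ : MvPolynomial σ R} {n : ℕ} (hφ : φ.IsHomogeneous n) (r : R) (x : σ → R) :
    eval (r • x) φ = r ^ n * eval x φ := by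
  simp only [eval_eq, Finset.mul_sum, Pi.smul_apply, smul_eq_mul, mul_pow,
    Finset.prod_mul_distrib, Finset.prod_pow_eq_pow_sum]
  refine Finset.sum_congr rfl fun m hm => ?_
  rw [← hφ.degree_eq_sum_deg_support hm]
  ring

lemma isCompact_setOf_sum_sq_eq_one (ι : Type*) [Fintype ι] :
    IsCompact {x : ι → ℝ | ∑ i, x i ^ 2 = 1} := by
  have hsphere : {x : ι → ℝ | ∑ i, x i ^ 2 = 1} =
      (EuclideanSpace.equiv ι ℝ).symm ⁻¹' Metric.sphere 0 1 := by
    ext x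
    simp [← EuclideanSpace.real_norm_sq_eq, pow_eq_one_iff_of_nonneg (norm_nonneg _)]
  rw [hsphere]
  exact (EuclideanSpace.equiv ι ℝ).symm.toHomeomorph.isCompact_preimage.2 (isCompact_sphere 0 1)

theorem IsCompact.exists_pos_forall_exists_mem_le_abs {X ι : Type*} [TopologicalSpace X]
    {S : Set X} (hS : IsCompact S) {f : ι → X → ℝ} (hf : ∀ i, Continuous (f i))
    (h : ∀ x ∈ S, ∃ i, f i x ≠ 0) :
    ∃ (t : Finset ι) (σ : ℝ), 0 < σ ∧ ∀ x ∈ S, ∃ i ∈ t, σ ≤ |f i x| := by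
  classical
  obtain ⟨t, ht⟩ := hS.elim_finite_subcover
    (fun k : ι × ℕ => {x | 1 / (k.2 + 1 : ℝ) < |f k.1 x|})
    (fun k => isOpen_lt continuous_const (hf k.1).abs) fun x hx => by
      obtain ⟨i, hi⟩ := h x hx
      obtain ⟨n, hn⟩ := exists_nat_one_div_lt (abs_pos.2 hi)
      exact Set.mem_iUnion.2 ⟨(i, n), hn⟩
  refine ⟨t.image Prod.fst, 1 / (t.sup Prod.snd + 1 : ℝ), by positivity, fun x hx => ?_⟩
  obtain ⟨k, hk, hxk⟩ := Set.mem_iUnion₂.1 (ht hx)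
  refine ⟨k.1, Finset.mem_image_of_mem _ hk, le_trans ?_ (le_of_lt hxk)⟩
  gcongr
  exact_mod_cast Finset.le_sup (f := Prod.snd) hk

lemma MvPolynomial.IsHomogeneous.exists_sum_sq_eq_one_eval_ne_zero {ι : Type*} [Fintype ι]
    {φ : MvPolynomial ι ℝ} {n : ℕ} (hφ : φ.IsHomogeneous n) {x e : ι → ℝ}
    (hx : eval x φ ≠ 0) (he : ∑ i, e i ^ 2 = 1) :
    ∃ u : ι → ℝ, ∑ i, u i ^ 2 = 1 ∧ eval u φ ≠ 0 := by
  rcases eq_or_ne x 0 with rfl | hx0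
  -- `eval 0 φ = 0 ^ n * eval e φ ≠ 0` forces `φ` to be a constant, nonzero at `e`.
  · refine ⟨e, he, fun hev => hx ?_⟩
    rw [← zero_smul ℝ e, hφ.eval_smul, hev, mul_zero]
  · obtain ⟨i, hi⟩ := Function.ne_iff.1 hx0
    have hpos : 0 < ∑ i, x i ^ 2 :=
      Finset.sum_pos' (fun _ _ => sq_nonneg _) ⟨i, Finset.mem_univ i, sq_pos_of_ne_zero hi⟩
    refine ⟨(√(∑ i, x i ^ 2))⁻¹ • x, ?_, ?_⟩
    · simp only [Pi.smul_apply, smul_eq_mul, mul_pow, ← Finset.mul_sum, inv_pow,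
        Real.sq_sqrt hpos.le]
      exact inv_mul_cancel₀ hpos.ne'
    · rw [hφ.eval_smul]
      exact mul_ne_zero (by positivity) hx

theorem stmt_12_general (d : ℕ)
    (Q : ℕ → Fin d → MvPolynomial (Fin d) ℝ)
    (hhom : ∀ j i, (Q j i).IsHomogeneous j)
    (hnd : ∀ γ : Fin d → ℝ, γ ≠ 0 →
      ∃ (j : ℕ) (x : Fin d → ℝ), (∑ i, γ i * MvPolynomial.eval x (Q j i)) ≠ 0) :
    ∃ (p : ℕ) (σ : ℝ), 0 < σ ∧
      ∀ e : Fin d → ℝ, (∑ i, e i ^ 2) = 1 →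
        ∃ u : Fin d → ℝ, (∑ i, u i ^ 2) = 1 ∧
          ∃ j ≤ p, σ ≤ (Nat.factorial j : ℝ) * |∑ i, e i * MvPolynomial.eval u (Q j i)| := by
  have hunit_pairing : ∀ e ∈ {e : Fin d → ℝ | ∑ i, e i ^ 2 = 1},
      ∃ k : ℕ × {u : Fin d → ℝ // ∑ i, u i ^ 2 = 1},
        ∑ i, e i * eval k.2.1 (Q k.1 i) ≠ 0 := by
    intro e he
    obtain ⟨j, x, hx⟩ := hnd e (by rintro rfl; simp at he)
    have hφ : (∑ i, C (e i) * Q j i).IsHomogeneous j :=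
      IsHomogeneous.sum _ _ _ fun i _ => (hhom j i).C_mul (e i)
    obtain ⟨u, hu, hne⟩ := hφ.exists_sum_sq_eq_one_eval_ne_zero (x := x) (by simpa using hx) he
    exact ⟨(j, ⟨u, hu⟩), by simpa using hne⟩
  obtain ⟨t, σ, hσ, ht⟩ :=
    (isCompact_setOf_sum_sq_eq_one (Fin d)).exists_pos_forall_exists_mem_le_abs
      (fun k => by fun_prop) hunit_pairing
  refine ⟨t.sup Prod.fst, σ, hσ, fun e he => ?_⟩
  obtain ⟨⟨j, u, hu⟩, hk, hle⟩ := ht e he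
  refine ⟨u, hu, j, Finset.le_sup (f := Prod.fst) hk, hle.trans ?_⟩
  exact le_mul_of_one_le_left (abs_nonneg _) (by exact_mod_cast Nat.factorial_pos j)

/-- Lemma 7.3 of the paper. If `P_j` are the homogeneous components
of degree `j` of the Birkhoff normal form frequency map, `P_0 ≡ ω₀ ≠ 0`, and the normal
form is `0`-degenerate (no nonzero `γ` with `⟨γ, P_j⟩ ≡ 0` for all `j`), then there are
`p ∈ ℕ` and `σ > 0` such that for every (Euclidean) unit vector `e` there is a unit
vector `u` with `max_{0 ≤ j ≤ p} j! |⟨e, P_j(u)⟩| ≥ σ`. -/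
theorem stmt_12 (d : ℕ) (hd : 1 ≤ d) (ω₀ : Fin d → ℝ) (hω : ω₀ ≠ 0)
    (Q : ℕ → Fin d → MvPolynomial (Fin d) ℝ)
    (hhom : ∀ j i, (Q j i).IsHomogeneous j)
    (hQ0 : ∀ (x : Fin d → ℝ) (i : Fin d), MvPolynomial.eval x (Q 0 i) = ω₀ i)
    (hnd : ∀ γ : Fin d → ℝ, γ ≠ 0 →
      ∃ (j : ℕ) (x : Fin d → ℝ), (∑ i, γ i * MvPolynomial.eval x (Q j i)) ≠ 0) :
    ∃ (p : ℕ) (σ : ℝ), 0 < σ ∧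
      ∀ e : Fin d → ℝ, (∑ i, e i ^ 2) = 1 →
        ∃ u : Fin d → ℝ, (∑ i, u i ^ 2) = 1 ∧
          ∃ j ≤ p, σ ≤ (Nat.factorial j : ℝ) * |∑ i, e i * MvPolynomial.eval u (Q j i)| :=
  stmt_12_general d Q hhom hnd
end
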